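/- Let p : E → B be a G-fibration and B' ⊆ B a G-invariant subset; set E' = p⁻¹(B') and let p' : E' → B' be the restriction of p. Then the square consisting of the invariant parametrized fibrations Ψ' : (E')^I_{B'} ×_{E'/G} (E')^I_{B'} → E' ×_{B'/G} E' and Ψ : E^I_B ×_{E/G} E^I_B → E ×_{B/G} E together with the inclusion maps is a pullback square; consequently, the invariant parametrized topological complexity satisfies TC^G[p' : E' → B'] ≤ TC^G[p : E → B]. -/

import Mathlib

/-- A path lies in a single fibre of `p`. -/
def fibrePath {E B : Type} [TopologicalSpace E] (p : E → B) (γ : C(unitInterval, E)) : Prop :=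
  ∃ b : B, ∀ t : unitInterval, p (γ t) = b

/-- The base `E ×_{B/G} E` of the invariant parametrized fibration, for the action
`aB` of `G` on `B`. -/
def invBase (G : Type) {E B : Type} (aB : G → B → B) (p : E → B) : Set (E × E) :=
  {z | ∃ g : G, p z.1 = aB g (p z.2)}

/-- A `(G×G)`-equivariant section of the invariant parametrized fibration
`Ψ : E^I_B ×_{E/G} E^I_B → E ×_{B/G} E`, `Ψ(γ,δ) = (γ(0),δ(1))`, over `U`. -/
def InvSecOver (G : Type) {E B : Type} [TopologicalSpace E]
    (aE : G → E → E) (p : E → B) (U : Set (E × E)) : Prop :=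
  ∃ s : U → C(unitInterval, E) × C(unitInterval, E),
    Continuous s ∧
    (∀ u : U, fibrePath p (s u).1 ∧ fibrePath p (s u).2) ∧
    (∀ u : U, ∃ g : G, (s u).2 0 = aE g ((s u).1 1)) ∧
    (∀ u : U, (s u).1 0 = u.1.1 ∧ (s u).2 1 = u.1.2) ∧
    (∀ (g₁ g₂ : G) (u : U) (hu : (aE g₁ u.1.1, aE g₂ u.1.2) ∈ U),
      ∀ t : unitInterval,
        (s ⟨_, hu⟩).1 t = aE g₁ ((s u).1 t) ∧ (s ⟨_, hu⟩).2 t = aE g₂ ((s u).2 t))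

/-- `TC^G[p : E → B] ≤ n`: there is a cover of `E ×_{B/G} E` by `n` relatively open
`(G×G)`-invariant subsets, each admitting a `(G×G)`-equivariant section of `Ψ`. -/
def InvPTCle (G : Type) {E B : Type} [TopologicalSpace E] [TopologicalSpace B]
    (aE : G → E → E) (aB : G → B → B) (p : E → B) (n : ℕ) : Prop :=
  ∃ U : Fin n → Set (E × E),
    (∀ i, ∃ V : Set (E × E), IsOpen V ∧ U i = V ∩ invBase G aB p) ∧
    (∀ i (g₁ g₂ : G) (z : E × E), z ∈ U i → (aE g₁ z.1, aE g₂ z.2) ∈ U i) ∧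
    invBase G aB p ⊆ (⋃ i, U i) ∧
    ∀ i, InvSecOver G aE p (U i)

/-- The invariant parametrized topological complexity `TC^G[p : E → B]`. -/
noncomputable def invPTC (G : Type) {E B : Type} [TopologicalSpace E] [TopologicalSpace B]
    (aE : G → E → E) (aB : G → B → B) (p : E → B) : ℕ∞ :=
  sInf {n : ℕ∞ | ∃ k : ℕ, n = (k : ℕ∞) ∧ InvPTCle G aE aB p k}

/-- `p` is a `G`-fibration. -/
def IsGFibration (G : Type) [Group G] [TopologicalSpace G]
    {E B : Type} [TopologicalSpace E] [TopologicalSpace B]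
    [MulAction G E] [MulAction G B] (p : E → B) : Prop :=
  ∀ (X : Type) (_ : TopologicalSpace X) (_ : MulAction G X) (_ : ContinuousSMul G X)
    (H : X × unitInterval → B) (h : X → E),
      Continuous H → (∀ (g : G) (x : X) (t : unitInterval), H (g • x, t) = g • H (x, t)) →
      Continuous h → (∀ (g : G) (x : X), h (g • x) = g • h x) →
      (∀ x : X, p (h x) = H (x, 0)) →
      ∃ Ht : X × unitInterval → E, Continuous Ht ∧
        (∀ (g : G) (x : X) (t : unitInterval), Ht (g • x, t) = g • Ht (x, t)) ∧
        (∀ (x : X) (t : unitInterval), p (Ht (x, t)) = H (x, t)) ∧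
        (∀ x : X, Ht (x, 0) = h x)

/-! A fibre path of `p` with one value in `E' = p⁻¹(B')` stays in `E'`; this is the pullback
property of the square. Hence an equivariant section of `Ψ` over `U ⊆ E ×_{B/G} E`, restricted to
pairs in `E' × E'`, corestricts to an equivariant section of `Ψ'`, and pulling an open cover back
along `E' ×_{B'/G} E' ⊆ E ×_{B/G} E` bounds `TC^G[p']` by `TC^G[p]`. -/

namespace ContinuousMap

variable {X Y Z : Type*} [TopologicalSpace X] [TopologicalSpace Y] [TopologicalSpace Z]

def codRestrict (f : C(X, Y)) (s : Set Y) (hs : ∀ x, f x ∈ s) : C(X, s) :=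
  ⟨Set.codRestrict f s hs, f.continuous.codRestrict hs⟩

@[simp]
theorem coe_codRestrict_apply (f : C(X, Y)) (s : Set Y) (hs : ∀ x, f x ∈ s) (x : X) :
    (f.codRestrict s hs x : Y) = f x :=
  rfl

theorem continuous_codRestrict {F : Z → C(X, Y)} (hF : Continuous F) (s : Set Y)
    (hs : ∀ z x, F z x ∈ s) : Continuous fun z => (F z).codRestrict s (hs z) :=
  (isEmbedding_postcomp ⟨Subtype.val, continuous_subtype_val⟩
    Topology.IsEmbedding.subtypeVal).continuous_iff.2 hF

end ContinuousMap

open ContinuousMap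

section Restriction

variable {G E B : Type} {p : E → B} {S : Set B}

theorem invBase_restrictPreimage {aB : G → B → B} {aB' : G → S → S}
    (hcompat : ∀ g b, (aB' g b : B) = aB g b) :
    invBase G aB' (S.restrictPreimage p) =
      Prod.map Subtype.val Subtype.val ⁻¹' invBase G aB p := by
  ext z
  simp [invBase, Subtype.ext_iff, hcompat]

variable [TopologicalSpace E]

theorem fibrePath.apply_mem_preimage {γ : C(unitInterval, E)} (hγ : fibrePath p γ)
    {t₀ : unitInterval} (h : γ t₀ ∈ p ⁻¹' S) (t : unitInterval) : γ t ∈ p ⁻¹' S := by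
  obtain ⟨b, hb⟩ := hγ
  simpa only [Set.mem_preimage, hb] using h

theorem fibrePath.codRestrict {γ : C(unitInterval, E)} (hγ : fibrePath p γ)
    (h : ∀ t, γ t ∈ p ⁻¹' S) : fibrePath (S.restrictPreimage p) (γ.codRestrict _ h) := by
  obtain ⟨b, hb⟩ := hγ
  exact ⟨⟨b, hb 0 ▸ h 0⟩, fun t => Subtype.ext (hb t)⟩

theorem InvSecOver.restrictPreimage {aE : G → E → E} {aE' : G → p ⁻¹' S → p ⁻¹' S}
    (hcompat : ∀ g x, (aE' g x : E) = aE g x) {U : Set (E × E)}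
    (hU : InvSecOver G aE p U) :
    InvSecOver G aE' (S.restrictPreimage p) (Prod.map Subtype.val Subtype.val ⁻¹' U) := by
  obtain ⟨s, hs_cont, hs_fib, hs_orbit, hs_ends, hs_equiv⟩ := hU
  set W := Prod.map Subtype.val Subtype.val ⁻¹' U
  let ι : W → U := fun u => ⟨Prod.map Subtype.val Subtype.val u.1, u.2⟩
  have hι : Continuous ι :=
    ((continuous_subtype_val.prodMap continuous_subtype_val).comp
      continuous_subtype_val).subtype_mk _
  have hmem : ∀ u t, (s (ι u)).1 t ∈ p ⁻¹' S ∧ (s (ι u)).2 t ∈ p ⁻¹' S := fun u t =>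
    ⟨(hs_fib (ι u)).1.apply_mem_preimage (t₀ := 0) ((hs_ends (ι u)).1.symm ▸ u.1.1.2) t,
      (hs_fib (ι u)).2.apply_mem_preimage (t₀ := 1) ((hs_ends (ι u)).2.symm ▸ u.1.2.2) t⟩
  refine ⟨fun u => ((s (ι u)).1.codRestrict _ (hmem u · |>.1),
      (s (ι u)).2.codRestrict _ (hmem u · |>.2)), ?_, fun u => ?_, fun u => ?_, fun u => ?_,
      fun g₁ g₂ u hu t => ?_⟩
  · exact (continuous_codRestrict ((continuous_fst.comp hs_cont).comp hι) _ _).prodMk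
      (continuous_codRestrict ((continuous_snd.comp hs_cont).comp hι) _ _)
  · exact ⟨(hs_fib (ι u)).1.codRestrict _, (hs_fib (ι u)).2.codRestrict _⟩
  · obtain ⟨g, hg⟩ := hs_orbit (ι u)
    exact ⟨g, Subtype.ext (by simpa [hcompat] using hg)⟩
  · exact ⟨Subtype.ext (hs_ends (ι u)).1, Subtype.ext (hs_ends (ι u)).2⟩
  · have hu' : (aE g₁ (ι u).1.1, aE g₂ (ι u).1.2) ∈ U := by simpa [W, ι, hcompat] using hu
    have hι_act : ι ⟨_, hu⟩ = ⟨_, hu'⟩ := Subtype.ext (Prod.ext (hcompat _ _) (hcompat _ _))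
    obtain ⟨h₁, h₂⟩ := hs_equiv g₁ g₂ (ι u) hu' t
    exact ⟨Subtype.ext (by simpa [hcompat, hι_act] using h₁),
      Subtype.ext (by simpa [hcompat, hι_act] using h₂)⟩

variable [TopologicalSpace B]

theorem InvPTCle.restrictPreimage {aE : G → E → E} {aE' : G → p ⁻¹' S → p ⁻¹' S}
    {aB : G → B → B} {aB' : G → S → S} (hcompatE : ∀ g x, (aE' g x : E) = aE g x)
    (hcompatB : ∀ g b, (aB' g b : B) = aB g b) {n : ℕ} (h : InvPTCle G aE aB p n) :
    InvPTCle G aE' aB' (S.restrictPreimage p) n := by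
  obtain ⟨U, hU_open, hU_inv, hU_cover, hU_sec⟩ := h
  have hι : Continuous (Prod.map Subtype.val Subtype.val : p ⁻¹' S × p ⁻¹' S → E × E) :=
    continuous_subtype_val.prodMap continuous_subtype_val
  refine ⟨fun i => Prod.map Subtype.val Subtype.val ⁻¹' U i, fun i => ?_,
    fun i g₁ g₂ z hz => ?_, ?_, fun i => (hU_sec i).restrictPreimage hcompatE⟩
  · obtain ⟨V, hV, hUV⟩ := hU_open i
    refine ⟨_, hV.preimage hι, ?_⟩
    simp only [hUV, invBase_restrictPreimage hcompatB, Set.preimage_inter]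
  · simpa [hcompatE] using hU_inv i g₁ g₂ _ hz
  · rw [invBase_restrictPreimage hcompatB, ← Set.preimage_iUnion]
    exact Set.preimage_mono hU_cover

theorem invPTC_restrictPreimage_le {aE : G → E → E} {aE' : G → p ⁻¹' S → p ⁻¹' S}
    {aB : G → B → B} {aB' : G → S → S} (hcompatE : ∀ g x, (aE' g x : E) = aE g x)
    (hcompatB : ∀ g b, (aB' g b : B) = aB g b) :
    invPTC G aE' aB' (S.restrictPreimage p) ≤ invPTC G aE aB p :=
  sInf_le_sInf fun _ ⟨k, hk, h⟩ => ⟨k, hk, h.restrictPreimage hcompatE hcompatB⟩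

end Restriction

/-- For a `G`-fibration `p : E → B` and a `G`-invariant subset
`B' ⊆ B`, with `E' = p⁻¹(B')` and `p' : E' → B'` the restriction of `p`, the square of
the invariant parametrized fibrations `Ψ'` and `Ψ` with the inclusions is a pullback
square (any pair of fibre paths in `E` whose endpoints land in `E'` lies entirely in
`E'`), and consequently `TC^G[p' : E' → B'] ≤ TC^G[p : E → B]`. -/
theorem invPTC_restriction_le (G : Type) [Group G]
    {E B : Type} [TopologicalSpace E] [TopologicalSpace B]
    [MulAction G E] [MulAction G B]
    (p : E → B)
    (hequiv : ∀ (g : G) (e : E), p (g • e) = g • p e)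
    (B' : Set B) (hB'inv : ∀ (g : G) (b : B), b ∈ B' → g • b ∈ B') :
    -- the pullback property of the square
    (∀ γ δ : C(unitInterval, E), fibrePath p γ → fibrePath p δ →
      (∃ g : G, δ 0 = g • γ 1) → γ 0 ∈ p ⁻¹' B' → δ 1 ∈ p ⁻¹' B' →
      ∀ t : unitInterval, γ t ∈ p ⁻¹' B' ∧ δ t ∈ p ⁻¹' B') ∧
    -- consequently, `TC^G[p'] ≤ TC^G[p]`
    invPTC G
      (fun (g : G) (x : (p ⁻¹' B' : Set E)) =>
        (⟨g • x.1, by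
          have hx := x.2
          simp only [Set.mem_preimage] at hx ⊢
          rw [hequiv]
          exact hB'inv g _ hx⟩ : (p ⁻¹' B' : Set E)))
      (fun (g : G) (b : B') => (⟨g • b.1, hB'inv g b.1 b.2⟩ : B'))
      (fun x : (p ⁻¹' B' : Set E) => (⟨p x.1, x.2⟩ : B'))
      ≤ invPTC G (fun (g : G) (e : E) => g • e) (fun (g : G) (b : B) => g • b) p :=
  ⟨fun _ _ hγ hδ _ hγ₀ hδ₁ t => ⟨hγ.apply_mem_preimage hγ₀ t, hδ.apply_mem_preimage hδ₁ t⟩,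
    invPTC_restrictPreimage_le (fun _ _ => rfl) fun _ _ => rfl⟩
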